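/- Let ν be a probability measure on ℝ, let f := ν ∗ φ be the Gaussian mixture density, and let V(y) := −log(φ(y)²/f(y)). Suppose that a > 0 and ν([−a, a]) ≥ 1/2. Then for all y ∈ ℝ, |V'(y)| ≤ (3 + a + √(log 4)) (|y| + 1). -/

import Mathlib

open MeasureTheory Real Filter

/-- The standard normal density. -/
noncomputable def gauss (y : ℝ) : ℝ := (Real.sqrt (2 * Real.pi))⁻¹ * Real.exp (-(y ^ 2) / 2)

/-- The Gaussian mixture density `f_ν = ν ∗ φ`. -/
noncomputable def mixDens (ν : Measure ℝ) (y : ℝ) : ℝ := ∫ u, gauss (y - u) ∂ν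



lemma sqrt2pi_pos : 0 < Real.sqrt (2 * Real.pi) := Real.sqrt_pos.mpr (by positivity)

lemma gauss_pos (y : ℝ) : 0 < gauss y :=
  mul_pos (inv_pos.mpr sqrt2pi_pos) (Real.exp_pos _)

lemma gauss_continuous : Continuous gauss := by
  unfold gauss; fun_prop

lemma gauss_le (t : ℝ) : gauss t ≤ (Real.sqrt (2 * Real.pi))⁻¹ := by
  have he : Real.exp (-(t ^ 2) / 2) ≤ 1 := Real.exp_le_one_iff.mpr (by nlinarith [sq_nonneg t])
  have hc := (inv_pos.mpr sqrt2pi_pos).le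
  unfold gauss
  nlinarith

lemma gauss_anti {x t : ℝ} (h : |x| ≤ |t|) : gauss t ≤ gauss x := by
  unfold gauss
  have hx2 : x ^ 2 ≤ t ^ 2 := by
    rw [← sq_abs x, ← sq_abs t]; exact pow_le_pow_left₀ (abs_nonneg _) h 2
  have he := Real.exp_le_exp.mpr (show -(t ^ 2) / 2 ≤ -(x ^ 2) / 2 by linarith)
  exact mul_le_mul_of_nonneg_left he (inv_pos.mpr sqrt2pi_pos).le

lemma gauss_hasDeriv (y : ℝ) : HasDerivAt gauss (-y * gauss y) y := by
  have h : HasDerivAt (fun x : ℝ => -(x ^ 2) / 2) (-y) y := by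
    have := ((hasDerivAt_pow 2 y).neg).div_const 2
    refine this.congr_deriv ?_
    simp; ring
  have := (h.exp).const_mul (Real.sqrt (2 * Real.pi))⁻¹
  unfold gauss
  refine this.congr_deriv ?_
  ring

lemma abs_mul_gauss_le (t : ℝ) : |t| * gauss t ≤ (Real.sqrt (2 * Real.pi))⁻¹ := by
  have h1 : |t| ≤ Real.exp (t ^ 2 / 2) := by
    have h2 := Real.add_one_le_exp (t ^ 2 / 2)
    nlinarith [sq_abs t, sq_nonneg (|t| - 1)]
  unfold gauss
  calc |t| * ((Real.sqrt (2 * Real.pi))⁻¹ * Real.exp (-(t ^ 2) / 2))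
      = (Real.sqrt (2 * Real.pi))⁻¹ * (|t| * Real.exp (-(t ^ 2) / 2)) := by ring
    _ ≤ (Real.sqrt (2 * Real.pi))⁻¹ * (Real.exp (t ^ 2 / 2) * Real.exp (-(t ^ 2) / 2)) :=
        mul_le_mul_of_nonneg_left (mul_le_mul_of_nonneg_right h1 (Real.exp_pos _).le)
          (inv_pos.mpr sqrt2pi_pos).le
    _ = (Real.sqrt (2 * Real.pi))⁻¹ := by
        rw [← Real.exp_add, show t ^ 2 / 2 + -(t ^ 2) / 2 = 0 by ring, Real.exp_zero, mul_one]

lemma mul_gauss_anti {T t : ℝ} (hT : 1 ≤ T) (h : T ≤ |t|) : |t| * gauss t ≤ T * gauss T := by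
  have hc := (inv_pos.mpr sqrt2pi_pos).le
  have e1 := Real.add_one_le_exp (|t| - T)
  have e2 : Real.exp (|t| - T) ≤ Real.exp ((t ^ 2 - T ^ 2) / 2) := by
    apply Real.exp_le_exp.mpr
    nlinarith [sq_abs t]
  have h3 : |t| ≤ T * Real.exp ((t ^ 2 - T ^ 2) / 2) := by
    calc |t| ≤ T * (1 + (|t| - T)) := by nlinarith
      _ ≤ T * Real.exp (|t| - T) := by nlinarith
      _ ≤ T * Real.exp ((t ^ 2 - T ^ 2) / 2) := by nlinarith [Real.exp_pos (|t| - T)]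
  unfold gauss
  calc |t| * ((Real.sqrt (2 * Real.pi))⁻¹ * Real.exp (-(t ^ 2) / 2))
      ≤ (T * Real.exp ((t ^ 2 - T ^ 2) / 2)) * ((Real.sqrt (2 * Real.pi))⁻¹ * Real.exp (-(t ^ 2) / 2)) :=
        mul_le_mul_of_nonneg_right h3 (by positivity)
    _ = T * ((Real.sqrt (2 * Real.pi))⁻¹ * Real.exp ((t ^ 2 - T ^ 2) / 2 + -(t ^ 2) / 2)) := by
        rw [Real.exp_add]; ring
    _ = T * ((Real.sqrt (2 * Real.pi))⁻¹ * Real.exp (-(T ^ 2) / 2)) := by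
        rw [show (t ^ 2 - T ^ 2) / 2 + -(t ^ 2) / 2 = -(T ^ 2) / 2 by ring]

lemma gauss_int (ν : Measure ℝ) [IsProbabilityMeasure ν] (y : ℝ) :
    Integrable (fun u => gauss (y - u)) ν := by
  apply Integrable.mono' (integrable_const (Real.sqrt (2 * Real.pi))⁻¹)
  · exact (gauss_continuous.comp (continuous_const.sub continuous_id)).aestronglyMeasurable
  · refine ae_of_all _ fun u => ?_
    rw [Real.norm_eq_abs, abs_of_pos (gauss_pos _)]
    exact gauss_le _

lemma gauss_mul_int (ν : Measure ℝ) [IsProbabilityMeasure ν] (y : ℝ) :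
    Integrable (fun u => |y - u| * gauss (y - u)) ν := by
  apply Integrable.mono' (integrable_const (Real.sqrt (2 * Real.pi))⁻¹)
  · exact (((continuous_const.sub continuous_id).abs).mul
      (gauss_continuous.comp (continuous_const.sub continuous_id))).aestronglyMeasurable
  · refine ae_of_all _ fun u => ?_
    rw [Real.norm_eq_abs, abs_of_nonneg (mul_nonneg (abs_nonneg _) (gauss_pos _).le)]
    exact abs_mul_gauss_le _

lemma mixDens_lb (ν : Measure ℝ) [IsProbabilityMeasure ν] {a : ℝ}
    (hbulk : (1 : ENNReal) / 2 ≤ ν (Set.Icc (-a) a)) (x : ℝ) :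
    1 / 2 * gauss (|x| + a) ≤ mixDens ν x := by
  have ha : 0 ≤ a := by
    by_contra hc
    push_neg at hc
    rw [Set.Icc_eq_empty (by linarith)] at hbulk
    simp at hbulk
  have h1 : ∀ u ∈ Set.Icc (-a) a, gauss (|x| + a) ≤ gauss (x - u) := by
    intro u hu
    apply gauss_anti
    rw [abs_of_nonneg (by positivity : (0:ℝ) ≤ |x| + a)]
    have h2 : |u| ≤ a := abs_le.mpr ⟨hu.1, hu.2⟩
    calc |x - u| ≤ |x| + |u| := abs_sub x u
      _ ≤ |x| + a := by linarith
  have key := setIntegral_ge_of_const_le measurableSet_Icc (measure_ne_top ν _) h1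
    ((gauss_int ν x).integrableOn)
  have h3 : (1:ℝ) / 2 ≤ (ν (Set.Icc (-a) a)).toReal := by
    have := ENNReal.toReal_mono (measure_ne_top ν _) hbulk
    simpa using this
  have h4 : 1 / 2 * gauss (|x| + a) ≤ gauss (|x| + a) * (ν (Set.Icc (-a) a)).toReal := by
    nlinarith [gauss_pos (|x| + a)]
  rw [smul_eq_mul, measureReal_def, mul_comm] at key
  exact h4.trans (key.trans (setIntegral_le_integral (gauss_int ν x)
    (ae_of_all _ fun u => (gauss_pos _).le)))

lemma mixDens_hasDeriv (ν : Measure ℝ) [IsProbabilityMeasure ν] (y : ℝ) :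
    HasDerivAt (mixDens ν) (∫ u, -(y - u) * gauss (y - u) ∂ν) y := by
  have h := hasDerivAt_integral_of_dominated_loc_of_deriv_le (μ := ν) (𝕜 := ℝ)
    (F := fun x u => gauss (x - u)) (F' := fun x u => -(x - u) * gauss (x - u))
    (bound := fun _ => (Real.sqrt (2 * Real.pi))⁻¹) (Metric.ball_mem_nhds y one_pos)
    (Eventually.of_forall fun x => (gauss_int ν x).1)
    (gauss_int ν y)
    ((((continuous_const.sub continuous_id).neg).mul
      (gauss_continuous.comp (continuous_const.sub continuous_id))).aestronglyMeasurable)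
    (ae_of_all _ fun u x _ => by
      rw [Real.norm_eq_abs, abs_mul, abs_neg]
      rw [abs_of_pos (gauss_pos _)]
      exact abs_mul_gauss_le _)
    (integrable_const _)
    (ae_of_all _ fun u x _ => by
      have := (gauss_hasDeriv (x - u)).comp x ((hasDerivAt_id x).sub_const u)
      simpa [Function.comp_def] using this)
  exact h.2

theorem first_deriv_V_linear_growth (ν : Measure ℝ) [IsProbabilityMeasure ν]
    (V : ℝ → ℝ) (hV : V = fun y => -Real.log (gauss y ^ 2 / mixDens ν y))
    (a : ℝ) (ha : 0 < a) (hbulk : (1 : ENNReal) / 2 ≤ ν (Set.Icc (-a) a)) :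
    ∀ y : ℝ, |deriv V y| ≤ (3 + a + Real.sqrt (Real.log 4)) * (|y| + 1) := by
  intro y
  set s : ℝ := Real.sqrt (Real.log 4) with hs_def
  -- basic facts about s
  have hlog4 : (0:ℝ) ≤ Real.log 4 := Real.log_nonneg (by norm_num)
  have hs0 : 0 ≤ s := Real.sqrt_nonneg _
  have hs_sq : s ^ 2 = Real.log 4 := Real.sq_sqrt hlog4
  have hs1 : 1 ≤ s := by
    have h4 : Real.exp 1 ≤ 4 := by
      have := Real.exp_one_lt_d9
      linarith
    have : (1:ℝ) ≤ Real.log 4 := by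
      rw [← Real.log_exp 1]
      exact Real.log_le_log (Real.exp_pos 1) h4
    nlinarith
  have hs2 : s ≤ 2 := by
    nlinarith [Real.log_le_sub_one_of_pos (show (0:ℝ) < 4 by norm_num)]
  -- positivity of mixDens
  have hfpos : ∀ x : ℝ, 0 < mixDens ν x := fun x =>
    lt_of_lt_of_le (mul_pos (by norm_num) (gauss_pos _)) (mixDens_lb ν hbulk x)
  -- rewrite V
  have hVeq : V = fun x => x ^ 2 + 2 * Real.log (Real.sqrt (2 * Real.pi)) +
      Real.log (mixDens ν x) := by
    rw [hV]; funext x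
    rw [Real.log_div (pow_ne_zero 2 (gauss_pos x).ne') (hfpos x).ne', Real.log_pow]
    unfold gauss
    rw [Real.log_mul (inv_ne_zero sqrt2pi_pos.ne') (Real.exp_ne_zero _), Real.log_exp,
      Real.log_inv]
    push_cast; ring
  -- derivative of V
  set N : ℝ := ∫ u, -(y - u) * gauss (y - u) ∂ν with hN_def
  have hVd : HasDerivAt V (2 * y + (mixDens ν y)⁻¹ * N) y := by
    rw [hVeq]
    have h1 : HasDerivAt (fun x : ℝ => x ^ 2) (2 * y) y := by
      simpa using hasDerivAt_pow 2 y
    have h2 : HasDerivAt (fun x => Real.log (mixDens ν x)) ((mixDens ν y)⁻¹ * N) y :=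
      (Real.hasDerivAt_log (hfpos y).ne').comp y (mixDens_hasDeriv ν y)
    exact (h1.add_const _).add h2
  rw [hVd.deriv]
  -- constants
  set b : ℝ := |y| + a with hb_def
  have hb0 : 0 ≤ b := by positivity
  set T : ℝ := b + s with hT_def
  have hT1 : 1 ≤ T := by simp only [hT_def]; linarith
  -- gauss split : gauss (b + s) = gauss b * exp (-(b*s)) * (1/2)
  have hexp_s : Real.exp (-(s ^ 2) / 2) = 1 / 2 := by
    have hl : Real.log 4 = 2 * Real.log 2 := by
      rw [show (4:ℝ) = 2 ^ 2 by norm_num, Real.log_pow]; push_cast; ring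
    rw [hs_sq, hl, show -(2 * Real.log 2) / 2 = -Real.log 2 by ring, Real.exp_neg,
      Real.exp_log two_pos]
    norm_num
  have hsplit : gauss T = gauss b * Real.exp (-(b * s)) * (1 / 2) := by
    rw [← hexp_s]
    show gauss (b + s) = _
    unfold gauss
    rw [show -((b + s) ^ 2) / 2 = -(b ^ 2) / 2 + -(b * s) + -(s ^ 2) / 2 by ring,
      Real.exp_add, Real.exp_add]
    ring
  -- tail bound : T * gauss T ≤ (1 + s) * (1/2 * gauss b)
  have hTg : T * gauss T ≤ (1 + s) * (1 / 2 * gauss b) := by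
    have hbe : b * Real.exp (-(b * s)) ≤ 1 := by
      have h := Real.add_one_le_exp (b * s)
      have hble : b ≤ Real.exp (b * s) := by nlinarith
      calc b * Real.exp (-(b * s)) ≤ Real.exp (b * s) * Real.exp (-(b * s)) :=
            mul_le_mul_of_nonneg_right hble (Real.exp_pos _).le
        _ = 1 := by rw [← Real.exp_add]; simp
    have hse : s * Real.exp (-(b * s)) ≤ s := by
      have : Real.exp (-(b * s)) ≤ 1 := Real.exp_le_one_iff.mpr (by nlinarith)
      nlinarith
    have h9 : T * Real.exp (-(b * s)) ≤ 1 + s := by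
      simp only [hT_def]; rw [add_mul]; linarith
    calc T * gauss T = (T * Real.exp (-(b * s))) * (1 / 2 * gauss b) := by
          rw [hsplit]; ring
      _ ≤ (1 + s) * (1 / 2 * gauss b) :=
          mul_le_mul_of_nonneg_right h9 (by nlinarith [gauss_pos b])
  -- numerator bound
  set S : Set ℝ := {u : ℝ | |y - u| ≤ T} with hS_def
  have hSm : MeasurableSet S :=
    (isClosed_le ((continuous_const.sub continuous_id).abs) continuous_const).measurableSet
  have hI_split : (∫ u in S, |y - u| * gauss (y - u) ∂ν) +
      (∫ u in Sᶜ, |y - u| * gauss (y - u) ∂ν) = ∫ u, |y - u| * gauss (y - u) ∂ν :=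
    integral_add_compl hSm (gauss_mul_int ν y)
  have hI1 : (∫ u in S, |y - u| * gauss (y - u) ∂ν) ≤ T * mixDens ν y := by
    have step1 : (∫ u in S, |y - u| * gauss (y - u) ∂ν) ≤ ∫ u in S, T * gauss (y - u) ∂ν := by
      apply setIntegral_mono_on (gauss_mul_int ν y).integrableOn
        ((gauss_int ν y).const_mul T).integrableOn hSm
      intro u hu
      exact mul_le_mul_of_nonneg_right hu (gauss_pos _).le
    have step2 : (∫ u in S, T * gauss (y - u) ∂ν) = T * ∫ u in S, gauss (y - u) ∂ν :=
      integral_const_mul _ _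
    have step3 : (∫ u in S, gauss (y - u) ∂ν) ≤ mixDens ν y :=
      setIntegral_le_integral (gauss_int ν y) (ae_of_all _ fun u => (gauss_pos _).le)
    calc (∫ u in S, |y - u| * gauss (y - u) ∂ν) ≤ T * ∫ u in S, gauss (y - u) ∂ν := by
          rw [← step2]; exact step1
      _ ≤ T * mixDens ν y := mul_le_mul_of_nonneg_left step3 (by linarith)
  have hI2 : (∫ u in Sᶜ, |y - u| * gauss (y - u) ∂ν) ≤ T * gauss T := by
    have step1 : (∫ u in Sᶜ, |y - u| * gauss (y - u) ∂ν) ≤ ∫ _u in Sᶜ, T * gauss T ∂ν := by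
      apply setIntegral_mono_on (gauss_mul_int ν y).integrableOn
        (integrableOn_const (measure_ne_top ν _)) hSm.compl
      intro u hu
      have hu' : T ≤ |y - u| := le_of_lt (by simpa [hS_def] using hu)
      exact mul_gauss_anti hT1 hu'
    have step2 : (∫ _u in Sᶜ, T * gauss T ∂ν) = (ν Sᶜ).toReal * (T * gauss T) := by
      rw [setIntegral_const]; simp [smul_eq_mul, measureReal_def]
    have step3 : (ν Sᶜ).toReal ≤ 1 := by
      have := ENNReal.toReal_mono (measure_ne_top ν Set.univ) (measure_mono (Set.subset_univ Sᶜ))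
      simpa using this
    have hTgpos : 0 ≤ T * gauss T := mul_nonneg (by linarith) (gauss_pos _).le
    calc (∫ u in Sᶜ, |y - u| * gauss (y - u) ∂ν) ≤ (ν Sᶜ).toReal * (T * gauss T) := by
          rw [← step2]; exact step1
      _ ≤ 1 * (T * gauss T) := mul_le_mul_of_nonneg_right step3 hTgpos
      _ = T * gauss T := one_mul _
  have hNle : |N| ≤ (T + 1 + s) * mixDens ν y := by
    have hN1 : |N| ≤ ∫ u, |y - u| * gauss (y - u) ∂ν := by
      rw [hN_def]
      calc |∫ u, -(y - u) * gauss (y - u) ∂ν| ≤ ∫ u, |(-(y - u) * gauss (y - u))| ∂ν := by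
            have h := norm_integral_le_integral_norm (μ := ν)
              (fun u => -(y - u) * gauss (y - u))
            simp only [Real.norm_eq_abs] at h
            exact h
        _ = ∫ u, |y - u| * gauss (y - u) ∂ν := by
            congr 1; funext u
            rw [abs_mul, abs_neg, abs_of_pos (gauss_pos _)]
    have hflow : 1 / 2 * gauss b ≤ mixDens ν y := mixDens_lb ν hbulk y
    have htail : T * gauss T ≤ (1 + s) * mixDens ν y := by
      calc T * gauss T ≤ (1 + s) * (1 / 2 * gauss b) := hTg
        _ ≤ (1 + s) * mixDens ν y := mul_le_mul_of_nonneg_left hflow (by linarith)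
    calc |N| ≤ ∫ u, |y - u| * gauss (y - u) ∂ν := hN1
      _ = (∫ u in S, |y - u| * gauss (y - u) ∂ν) + ∫ u in Sᶜ, |y - u| * gauss (y - u) ∂ν :=
          hI_split.symm
      _ ≤ T * mixDens ν y + (1 + s) * mixDens ν y := by
          have := hI2.trans htail
          linarith
      _ = (T + 1 + s) * mixDens ν y := by ring
  -- final estimate
  have hfy := hfpos y
  have hratio : |(mixDens ν y)⁻¹ * N| ≤ T + 1 + s := by
    rw [abs_mul, abs_of_pos (inv_pos.mpr hfy), inv_mul_le_iff₀ hfy]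
    calc |N| ≤ (T + 1 + s) * mixDens ν y := hNle
      _ = mixDens ν y * (T + 1 + s) := by ring
  calc |2 * y + (mixDens ν y)⁻¹ * N| ≤ |2 * y| + |(mixDens ν y)⁻¹ * N| := abs_add_le _ _
    _ ≤ 2 * |y| + (T + 1 + s) := by
        rw [abs_mul]; simp only [Nat.abs_ofNat]
        linarith
    _ ≤ (3 + a + s) * (|y| + 1) := by
        simp only [hT_def, hb_def]
        nlinarith [abs_nonneg y]
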